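/- Let K ⊆ L• be a knowledge base each of whose members is in normal form, let R*_K = (L_0, …, L_{n-1}, L_∞), and let R = (M_0, …, M_{n-1}, M_∞) be any other ranked model of K (both represented with the same number of finite-index cells, padding with empty cells). Then for every i ∈ {0, …, n-1}: if L_j = M_j for all j < i, then M_i ⊆ L_i. -/

import Mathlib

attribute [local instance] Classical.propDecidable

universe u

/-- Sentences of Propositional Typicality Logic over atoms `P`. -/
inductive PTL (P : Type u) : Type u
  | atom : P → PTL P
  | neg  : PTL P → PTL P
  | conj : PTL P → PTL P → PTL P
  | top  : PTL P
  | bot  : PTL P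
  | typ  : PTL P → PTL P

namespace PTL

/-- Material implication, defined from `¬` and `∧`. -/
def impl {P : Type u} (a b : PTL P) : PTL P := neg (conj a (neg b))

/-- Disjunction, defined from `¬` and `∧`. -/
def disj {P : Type u} (a b : PTL P) : PTL P := neg (conj (neg a) (neg b))

/-- Purely propositional sentences: no occurrence of the typicality operator. -/
def IsProp {P : Type u} : PTL P → Prop
  | atom _ => True
  | neg a => IsProp a
  | conj a b => IsProp a ∧ IsProp b
  | top => True
  | bot => True
  | typ _ => False

end PTL

/-- Propositional valuations. -/
abbrev Val (P : Type u) := P → Bool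

/-- Satisfaction of a PTL sentence by a valuation, relative to a ranking
function `rho : Val P → ℕ∞`. -/
def satR {P : Type u} (rho : Val P → ℕ∞) : Val P → PTL P → Prop
  | v, PTL.atom p => v p = true
  | v, PTL.neg a => ¬ satR rho v a
  | v, PTL.conj a b => satR rho v a ∧ satR rho v b
  | _, PTL.top => True
  | _, PTL.bot => False
  | v, PTL.typ a => satR rho v a ∧ ∀ v', rho v' < rho v → ¬ satR rho v' a

/-- The convexity property of ranking functions. -/
def RkConvex {P : Type u} (rho : Val P → ℕ∞) : Prop :=
  ∀ (v : Val P) (i : ℕ), rho v = (i : ℕ∞) → ∀ j : ℕ, j < i → ∃ v', rho v' = (j : ℕ∞)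

/-- A ranked interpretation: a convex ranking function on valuations. -/
structure RankedInterp (P : Type u) where
  rk : Val P → ℕ∞
  convex : RkConvex rk

/-- `rho` is a ranked model of `a`: every possible valuation satisfies `a`. -/
def modelsR {P : Type u} (rho : Val P → ℕ∞) (a : PTL P) : Prop :=
  ∀ v, rho v < ⊤ → satR rho v a

/-- `R ⊨ a`. -/
def RankedInterp.models {P : Type u} (R : RankedInterp P) (a : PTL P) : Prop :=
  modelsR R.rk a

/-- `R` is a ranked model of the knowledge base `K`. -/
def modelsSet {P : Type u} (R : RankedInterp P) (K : Set (PTL P)) : Prop :=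
  ∀ a ∈ K, R.models a

/-- Ranked entailment consequences of `K`. -/
def Cn0 {P : Type u} (K : Set (PTL P)) : Set (PTL P) :=
  {a | ∀ R : RankedInterp P, modelsSet R K → R.models a}

/-- Conjunction of a list of sentences (empty conjunction is `⊤`). -/
def bigConj {P : Type u} : List (PTL P) → PTL P
  | [] => PTL.top
  | a :: l => PTL.conj a (bigConj l)

/-- Disjunction of a list of sentences (empty disjunction is `⊥`). -/
def bigDisj {P : Type u} : List (PTL P) → PTL P
  | [] => PTL.bot
  | a :: l => PTL.disj a (bigDisj l)

/-- `a` is in normal form: `⋀_{i≤t} •θᵢ → (φ ∨ ⋁_{i≤s} •ψᵢ)` with all the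
`θᵢ`, `φ`, `ψᵢ` purely propositional. -/
def InNormalForm {P : Type u} (a : PTL P) : Prop :=
  ∃ (ths : List (PTL P)) (phi : PTL P) (pss : List (PTL P)),
    (∀ t ∈ ths, t.IsProp) ∧ phi.IsProp ∧ (∀ s ∈ pss, s.IsProp) ∧
    a = PTL.impl (bigConj (ths.map PTL.typ)) (PTL.disj phi (bigDisj (pss.map PTL.typ)))

/-- `R^1_S`: increase by one the rank of every valuation not in `S`. -/
noncomputable def bump {P : Type u} (rho : Val P → ℕ∞) (S : Set (Val P)) : Val P → ℕ∞ :=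
  fun v => if v ∈ S then rho v else rho v + 1

/-- `R^∞_S`: make every valuation not in `S` impossible. -/
noncomputable def toInf {P : Type u} (rho : Val P → ℕ∞) (S : Set (Val P)) : Val P → ℕ∞ :=
  fun v => if v ∈ S then rho v else ⊤

/-- `⟦K⟧_rho`: the possible valuations satisfying every member of `K`. -/
def KExt {P : Type u} (K : Set (PTL P)) (rho : Val P → ℕ∞) : Set (Val P) :=
  {v | rho v < ⊤ ∧ ∀ a ∈ K, satR rho v a}

/-- The sequence `R_i` of the LM-minimal construction. -/
noncomputable def Rseq {P : Type u} (K : Set (PTL P)) : ℕ → Val P → ℕ∞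
  | 0 => fun _ => 0
  | i + 1 => bump (Rseq K i) (KExt K (Rseq K i))

/-- The sequence `S_i` of the LM-minimal construction:
`S_0 = ∅`, `S_{i+1} = ⟦K⟧_{R_i}`. -/
noncomputable def Sseq {P : Type u} (K : Set (PTL P)) : ℕ → Set (Val P)
  | 0 => ∅
  | i + 1 => KExt K (Rseq K i)

/-- The least `i ≥ 1` with `S_i = S_{i-1}`. -/
noncomputable def stopIdx {P : Type u} (K : Set (PTL P)) : ℕ :=
  sInf {i : ℕ | 1 ≤ i ∧ Sseq K i = Sseq K (i - 1)}

/-- The LM-minimal ranked interpretation `R*_K := (R_{i-1})^∞_{S_i}`. -/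
noncomputable def Rstar {P : Type u} (K : Set (PTL P)) : Val P → ℕ∞ :=
  toInf (Rseq K (stopIdx K - 1)) (Sseq K (stopIdx K))

/-- The cell of rank `i` of a ranking function. -/
def cell {P : Type u} (rho : Val P → ℕ∞) (i : ℕ∞) : Set (Val P) :=
  {u | rho u = i}

/-!
Let `e v` be the least `m` with `v ∈ S_{m+1}`. The truth of a normal-form sentence at `v` only
depends on which valuations lie strictly below `v`, and bumping the valuations outside `⟦K⟧_{R_m}`
(which sit on the top rank `m`) does not change this for members of `⟦K⟧_{R_m}`. Hence the `S_m`
increase, `R_m = min m e`, and once `S` pauses `R_m` and `R_{m+1}` induce the same order, so `S`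
stays constant and `R*_K = e`. If a ranked model `R` of `K` agrees with `R*_K` below rank `i` and
`R v = i`, then `e v ≥ i`, and `R`, `R_i` have the same valuations below `v`; so `v` satisfies `K`
in `R_i`, i.e. `e v ≤ i`.
-/

section Satisfaction

variable {P : Type u}

theorem satR_congr_of_isProp {a : PTL P} (ha : a.IsProp) (ρ ρ' : Val P → ℕ∞) (v : Val P) :
    satR ρ v a ↔ satR ρ' v a := by
  induction a with
  | atom p => rfl
  | neg b ih => exact not_congr (ih ha)
  | conj b c ihb ihc => exact and_congr (ihb ha.1) (ihc ha.2)
  | top | bot => rfl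
  | typ b _ => exact ha.elim

theorem satR_typ_congr {θ : PTL P} (hθ : θ.IsProp) {ρ ρ' : Val P → ℕ∞} {v : Val P}
    (hdown : ∀ w, ρ w < ρ v ↔ ρ' w < ρ' v) :
    satR ρ v (PTL.typ θ) ↔ satR ρ' v (PTL.typ θ) := by
  simp only [satR, satR_congr_of_isProp hθ ρ ρ', hdown]

@[simp]
theorem satR_impl (ρ : Val P → ℕ∞) (v : Val P) (a b : PTL P) :
    satR ρ v (PTL.impl a b) ↔ (satR ρ v a → satR ρ v b) := by
  simp only [PTL.impl, satR]; tauto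

@[simp]
theorem satR_disj (ρ : Val P → ℕ∞) (v : Val P) (a b : PTL P) :
    satR ρ v (PTL.disj a b) ↔ satR ρ v a ∨ satR ρ v b := by
  simp only [PTL.disj, satR]; tauto

@[simp]
theorem satR_bigConj (ρ : Val P → ℕ∞) (v : Val P) (l : List (PTL P)) :
    satR ρ v (bigConj l) ↔ ∀ a ∈ l, satR ρ v a := by
  induction l with
  | nil => simp [bigConj, satR]
  | cons a l ih => simp [bigConj, satR, ih]

@[simp]
theorem satR_bigDisj (ρ : Val P → ℕ∞) (v : Val P) (l : List (PTL P)) :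
    satR ρ v (bigDisj l) ↔ ∃ a ∈ l, satR ρ v a := by
  induction l with
  | nil => simp [bigDisj, satR]
  | cons a l ih => simp [bigDisj, ih]

theorem satR_congr_of_inNormalForm {a : PTL P} (ha : InNormalForm a) {ρ ρ' : Val P → ℕ∞}
    {v : Val P} (hdown : ∀ w, ρ w < ρ v ↔ ρ' w < ρ' v) : satR ρ v a ↔ satR ρ' v a := by
  obtain ⟨ths, φ, pss, hths, hφ, hpss, rfl⟩ := ha
  simp only [satR_impl, satR_disj, satR_bigConj, satR_bigDisj, List.forall_mem_map]
  simp only [List.mem_map, exists_exists_and_eq_and]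
  exact imp_congr (forall₂_congr fun θ hθ => satR_typ_congr (hths θ hθ) hdown)
    (or_congr (satR_congr_of_isProp hφ ρ ρ' v)
      (exists_congr fun ψ => and_congr_right fun hψ => satR_typ_congr (hpss ψ hψ) hdown))

theorem mem_KExt_of_forall_satR {K : Set (PTL P)} (hK : ∀ a ∈ K, InNormalForm a)
    {ρ ρ' : Val P → ℕ∞} {v : Val P} (hv : ρ' v < ⊤) (hsat : ∀ a ∈ K, satR ρ v a)
    (hdown : ∀ w, ρ w < ρ v ↔ ρ' w < ρ' v) : v ∈ KExt K ρ' :=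
  ⟨hv, fun a ha => (satR_congr_of_inNormalForm (hK a ha) hdown).1 (hsat a ha)⟩

end Satisfaction

section Construction

variable {P : Type u} {K : Set (PTL P)}

theorem le_bump (ρ : Val P → ℕ∞) (S : Set (Val P)) (v : Val P) : ρ v ≤ bump ρ S v := by
  unfold bump; split_ifs <;> simp

theorem KExt_subset_KExt_bump (hK : ∀ a ∈ K, InNormalForm a) {ρ : Val P → ℕ∞}
    (htop : ∀ v, ∀ w ∉ KExt K ρ, ρ v ≤ ρ w) : KExt K ρ ⊆ KExt K (bump ρ (KExt K ρ)) := by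
  intro v hv
  have hbv : bump ρ (KExt K ρ) v = ρ v := if_pos hv
  refine mem_KExt_of_forall_satR hK (hbv ▸ hv.1) hv.2 fun w => ?_
  rw [hbv]
  refine ⟨fun hw => ?_, (le_bump ρ _ w).trans_lt⟩
  have hwK : w ∈ KExt K ρ := by_contra fun hw' => (htop v w hw').not_gt hw
  rwa [bump, if_pos hwK]

theorem Rseq_le (K : Set (PTL P)) (n : ℕ) (v : Val P) : Rseq K n v ≤ n := by
  induction n with
  | zero => simp [Rseq]
  | succ n ih =>
    simp only [Rseq, bump]
    split_ifs
    · exact ih.trans (by simp)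
    · push_cast; exact add_le_add ih le_rfl

theorem Rseq_lt_top (K : Set (PTL P)) (n : ℕ) (v : Val P) : Rseq K n v < ⊤ :=
  (Rseq_le K n v).trans_lt (ENat.natCast_lt_top n)

theorem Sseq_succ_subset_of_forall_eq (hK : ∀ a ∈ K, InNormalForm a) {n : ℕ}
    (h : ∀ w ∉ Sseq K (n + 1), Rseq K n w = n) : Sseq K (n + 1) ⊆ Sseq K (n + 2) :=
  KExt_subset_KExt_bump hK fun v w hw => (h w hw).symm ▸ Rseq_le K n v

theorem Rseq_eq_of_notMem_Sseq (hK : ∀ a ∈ K, InNormalForm a) (n : ℕ) :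
    ∀ v ∉ Sseq K (n + 1), Rseq K n v = n := by
  induction n with
  | zero => intro v _; simp [Rseq]
  | succ n ih =>
    intro v hv
    have hv' : v ∉ Sseq K (n + 1) := fun h => hv (Sseq_succ_subset_of_forall_eq hK ih h)
    change bump (Rseq K n) (Sseq K (n + 1)) v = _
    rw [bump, if_neg hv', ih v hv']
    push_cast; rfl

theorem Sseq_mono (hK : ∀ a ∈ K, InNormalForm a) : Monotone (Sseq K) := by
  refine monotone_nat_of_le_succ fun n => ?_
  cases n with
  | zero => exact Set.empty_subset _
  | succ n => exact Sseq_succ_subset_of_forall_eq hK (Rseq_eq_of_notMem_Sseq hK n)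

/-- The rank `v` ends up with in `R*_K` (see `Rstar_eq_entryRank`). -/
noncomputable def entryRank (K : Set (PTL P)) (v : Val P) : ℕ∞ :=
  if h : ∃ m, v ∈ Sseq K (m + 1) then (Nat.find h : ℕ∞) else ⊤

theorem mem_Sseq_succ_iff (hK : ∀ a ∈ K, InNormalForm a) {n : ℕ} {v : Val P} :
    v ∈ Sseq K (n + 1) ↔ entryRank K v ≤ n := by
  unfold entryRank
  split_ifs with hex
  · rw [Nat.cast_le]
    exact ⟨fun hv => Nat.find_le hv,
      fun hle => Sseq_mono hK (Nat.succ_le_succ hle) (Nat.find_spec hex)⟩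
  · exact iff_of_false (fun hv => hex ⟨n, hv⟩) (by simp)

theorem Rseq_eq_min (hK : ∀ a ∈ K, InNormalForm a) (n : ℕ) (v : Val P) :
    Rseq K n v = min (n : ℕ∞) (entryRank K v) := by
  induction n with
  | zero => simp [Rseq]
  | succ n ih =>
    change bump (Rseq K n) (Sseq K (n + 1)) v = _
    by_cases hv : v ∈ Sseq K (n + 1)
    · have he := (mem_Sseq_succ_iff hK).1 hv
      rw [bump, if_pos hv, ih, min_eq_right he, min_eq_right (he.trans (by simp))]
    · have he : (n : ℕ∞) < entryRank K v := not_le.1 (mt (mem_Sseq_succ_iff hK).2 hv)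
      rw [bump, if_neg hv, ih, min_eq_left he.le,
        min_eq_left (by simpa using Order.add_one_le_of_lt he)]
      push_cast; rfl

theorem entryRank_ne_of_Sseq_succ_eq (hK : ∀ a ∈ K, InNormalForm a) {m : ℕ}
    (h : Sseq K (m + 1) = Sseq K m) (v : Val P) : entryRank K v ≠ m := by
  intro he
  have hv : v ∈ Sseq K m := h ▸ (mem_Sseq_succ_iff hK).2 he.le
  cases m with
  | zero => exact hv
  | succ k =>
    exact absurd (he ▸ (mem_Sseq_succ_iff hK).1 hv) (by exact_mod_cast k.not_succ_le_self)

theorem min_lt_min_iff_of_ne {m : ℕ} {x : ℕ∞} (hx : x ≠ m) (y : ℕ∞) :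
    min (m : ℕ∞) x < min (m : ℕ∞) y ↔ min ((m + 1 : ℕ) : ℕ∞) x < min ((m + 1 : ℕ) : ℕ∞) y := by
  rw [min_lt_min_right_iff, min_lt_min_right_iff, Nat.cast_succ,
    ENat.lt_add_one_iff (ENat.natCast_ne_top m), le_iff_lt_or_eq, or_iff_left hx]

theorem Sseq_succ_succ_eq (hK : ∀ a ∈ K, InNormalForm a) {m : ℕ}
    (h : Sseq K (m + 1) = Sseq K m) : Sseq K (m + 2) = Sseq K (m + 1) := by
  have hdown : ∀ v w, Rseq K m w < Rseq K m v ↔ Rseq K (m + 1) w < Rseq K (m + 1) v := by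
    intro v w
    simp only [Rseq_eq_min hK]
    exact min_lt_min_iff_of_ne (entryRank_ne_of_Sseq_succ_eq hK h w) _
  ext v
  exact ⟨fun hv => mem_KExt_of_forall_satR hK (Rseq_lt_top K m v) hv.2 fun w => (hdown v w).symm,
    fun hv => mem_KExt_of_forall_satR hK (Rseq_lt_top K (m + 1) v) hv.2 (hdown v)⟩

theorem Sseq_subset_of_succ_eq (hK : ∀ a ∈ K, InNormalForm a) {m : ℕ}
    (h : Sseq K (m + 1) = Sseq K m) (n : ℕ) : Sseq K n ⊆ Sseq K m := by
  have hstable : ∀ n, m ≤ n → Sseq K (n + 1) = Sseq K n := fun n hmn => by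
    induction n, hmn using Nat.le_induction with
    | base => exact h
    | succ n _ ih => exact Sseq_succ_succ_eq hK ih
  induction n with
  | zero => exact Set.empty_subset _
  | succ n ih =>
    rcases lt_or_ge n m with hnm | hmn
    · exact Sseq_mono hK hnm
    · exact (hstable n hmn).symm ▸ ih

theorem exists_stopIdx_eq (hK : ∀ a ∈ K, InNormalForm a) [Finite P] :
    ∃ m, stopIdx K = m + 1 ∧ Sseq K (m + 1) = Sseq K m := by
  obtain ⟨n, hn⟩ := WellFoundedGT.monotone_chain_condition ⟨Sseq K, Sseq_mono hK⟩
  have hne : {i : ℕ | 1 ≤ i ∧ Sseq K i = Sseq K (i - 1)}.Nonempty :=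
    ⟨n + 1, le_add_self, (hn (n + 1) n.le_succ).symm⟩
  obtain ⟨hk, hS⟩ : 1 ≤ stopIdx K ∧ Sseq K (stopIdx K) = Sseq K (stopIdx K - 1) :=
    Nat.sInf_mem hne
  exact ⟨stopIdx K - 1, by omega, by rwa [Nat.sub_add_cancel hk]⟩

theorem Rstar_eq_entryRank (hK : ∀ a ∈ K, InNormalForm a) [Finite P] (v : Val P) :
    Rstar K v = entryRank K v := by
  obtain ⟨m, hk, hm⟩ := exists_stopIdx_eq hK
  simp only [Rstar, toInf, hk, Nat.add_sub_cancel]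
  split_ifs with hv
  · rw [Rseq_eq_min hK, min_eq_right ((mem_Sseq_succ_iff hK).1 hv)]
  · refine (by_contra fun hne => ?_ : entryRank K v = ⊤).symm
    obtain ⟨j, hj⟩ := ENat.ne_top_iff_exists.1 hne
    exact hv (hm ▸ Sseq_subset_of_succ_eq hK hm (j + 1) ((mem_Sseq_succ_iff hK).2 hj.ge))

end Construction

theorem lt_coe_iff_of_cell_eq {P : Type u} {ρ ρ' : Val P → ℕ∞} {i : ℕ}
    (h : ∀ j : ℕ, j < i → cell ρ j = cell ρ' j) (w : Val P) : ρ w < i ↔ ρ' w < i := by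
  have hlt : ∀ x : ℕ∞, x < i ↔ ∃ j < i, x = j := fun x => by
    induction x using ENat.recTopCoe <;> simp
  rw [hlt, hlt]
  exact exists_congr fun j => and_congr_right fun hj => Set.ext_iff.1 (h j hj) w

theorem ptl_layer_inclusion_general {P : Type u} [Fintype P]
    (K : Set (PTL P)) (hK : ∀ a ∈ K, InNormalForm a)
    (R : RankedInterp P) (hR : modelsSet R K) (i : ℕ)
    (h : ∀ j : ℕ, j < i → cell (Rstar K) (j : ℕ∞) = cell R.rk (j : ℕ∞)) :
    cell R.rk (i : ℕ∞) ⊆ cell (Rstar K) (i : ℕ∞) := by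
  intro v (hv : R.rk v = i)
  have hlower : ∀ w, entryRank K w < i ↔ R.rk w < i := fun w => by
    rw [← Rstar_eq_entryRank hK]; exact lt_coe_iff_of_cell_eq h w
  have hge : (i : ℕ∞) ≤ entryRank K v := not_lt.1 fun hlt => ((hlower v).1 hlt).ne hv
  have hmem : v ∈ Sseq K (i + 1) := by
    refine mem_KExt_of_forall_satR hK (Rseq_lt_top K i v)
      (fun a ha => hR a ha v (hv ▸ ENat.natCast_lt_top i)) fun w => ?_
    rw [hv, Rseq_eq_min hK, Rseq_eq_min hK, min_eq_left hge, min_lt_iff, lt_self_iff_false,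
      false_or, hlower]
  change Rstar K v = i
  rw [Rstar_eq_entryRank hK]
  exact le_antisymm ((mem_Sseq_succ_iff hK).1 hmem) hge

/-- layer-inclusion lemma: if the cells of `R*_K` and of a
ranked model `R` of `K` agree below `i`, then the `i`-th cell of `R` is
included in that of `R*_K`. -/
theorem ptl_layer_inclusion {P : Type u} [Fintype P] [DecidableEq P]
    (K : Set (PTL P)) (hK : ∀ a ∈ K, InNormalForm a)
    (R : RankedInterp P) (hR : modelsSet R K) (i : ℕ)
    (h : ∀ j : ℕ, j < i → cell (Rstar K) (j : ℕ∞) = cell R.rk (j : ℕ∞)) :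
    cell R.rk (i : ℕ∞) ⊆ cell (Rstar K) (i : ℕ∞) :=
  ptl_layer_inclusion_general K hK R hR i h
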